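/- Let $\rho \ge 0$ solve $\rho_t + \mathrm{div}(\rho\mathbf{u}) = 0$ smoothly on $B_R \times [0,T]$ with $\mathbf{u} = 0$ on $\partial B_R$, $a > 1$, and $\bar{x}$ the weight $\bar{x}(x) = (e+|x|^2)^{1/2}\log^{1+\eta_0}(e+|x|^2)$, $\eta_0 > 0$. Then $\frac{d}{dt}\int_{B_R} \rho\bar{x}^a \, dx \le C \int_{B_R} \rho |\mathbf{u}| \bar{x}^{a-1}\log^{1+\eta_0}(e+|x|^2)\, dx \le C \|\rho\bar{x}^{a-1+\frac{8}{8+a}}\|_{L^{\frac{8+a}{7+a}}(B_R)} \|\mathbf{u}\bar{x}^{-\frac{4}{8+a}}\|_{L^{8+a}(B_R)}$, for a constant $C$ depending only on $a$ and $\eta_0$. -/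

import Mathlib

open MeasureTheory Metric Real

noncomputable section

abbrev E15 := EuclideanSpace ℝ (Fin 2)

def pd15 (f : E15 → ℝ) (i : Fin 2) (x : E15) : ℝ :=
  fderiv ℝ f x (EuclideanSpace.single i 1)

def div15 (v : E15 → Fin 2 → ℝ) (x : E15) : ℝ :=
  ∑ i, pd15 (fun y => v y i) i x

def barx15 (η₀ : ℝ) (x : E15) : ℝ :=
  Real.sqrt (Real.exp 1 + ‖x‖ ^ 2) * Real.log (Real.exp 1 + ‖x‖ ^ 2) ^ (1 + η₀)

/-! ### Auxiliary lemmas -/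

lemma s_pos15 (x : E15) : (0:ℝ) < Real.exp 1 + ‖x‖ ^ 2 :=
  add_pos_of_pos_of_nonneg (Real.exp_pos 1) (by positivity)

lemma one_le_log_s15 (x : E15) : (1:ℝ) ≤ Real.log (Real.exp 1 + ‖x‖ ^ 2) := by
  have h1 : Real.exp 1 ≤ Real.exp 1 + ‖x‖ ^ 2 := le_add_of_nonneg_right (by positivity)
  calc (1:ℝ) = Real.log (Real.exp 1) := (Real.log_exp 1).symm
    _ ≤ _ := Real.log_le_log (Real.exp_pos 1) h1

lemma one_le_sqrt_s15 (x : E15) : (1:ℝ) ≤ Real.sqrt (Real.exp 1 + ‖x‖ ^ 2) := by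
  have h : (1:ℝ) ≤ Real.exp 1 + ‖x‖ ^ 2 := by
    have := Real.add_one_le_exp (1:ℝ)
    nlinarith [sq_nonneg ‖x‖]
  calc (1:ℝ) = Real.sqrt 1 := Real.sqrt_one.symm
    _ ≤ _ := Real.sqrt_le_sqrt h

lemma one_le_barx15 {η₀ : ℝ} (hη : 0 ≤ η₀) (x : E15) : (1:ℝ) ≤ barx15 η₀ x := by
  have h1 := one_le_sqrt_s15 x
  have h2 : (1:ℝ) ≤ Real.log (Real.exp 1 + ‖x‖ ^ 2) ^ (1 + η₀) :=
    Real.one_le_rpow (one_le_log_s15 x) (by linarith)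
  calc (1:ℝ) = 1 * 1 := (one_mul 1).symm
    _ ≤ _ := mul_le_mul h1 h2 zero_le_one (by linarith)

lemma barx_pos15 {η₀ : ℝ} (hη : 0 ≤ η₀) (x : E15) : (0:ℝ) < barx15 η₀ x :=
  lt_of_lt_of_le one_pos (one_le_barx15 hη x)

section Phi
variable {a η₀ : ℝ}

lemma barx_contDiff15 (hη : 0 < η₀) : ContDiff ℝ (⊤ : ℕ∞) (barx15 η₀) := by
  rw [contDiff_iff_contDiffAt]
  intro x
  have hs : ContDiffAt ℝ (⊤ : ℕ∞) (fun y : E15 => Real.exp 1 + ‖y‖ ^ 2) x :=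
    (contDiff_const.add (contDiff_norm_sq ℝ)).contDiffAt
  have hsq : ContDiffAt ℝ (⊤ : ℕ∞) (fun y : E15 => Real.sqrt (Real.exp 1 + ‖y‖ ^ 2)) x :=
    (Real.contDiffAt_sqrt (s_pos15 x).ne').comp x hs
  have hlog : ContDiffAt ℝ (⊤ : ℕ∞) (fun y : E15 => Real.log (Real.exp 1 + ‖y‖ ^ 2)) x :=
    ContDiffAt.comp (g := Real.log) x (Real.contDiffAt_log.2 (s_pos15 x).ne') hs
  have hlogpow : ContDiffAt ℝ (⊤ : ℕ∞)
      (fun y : E15 => Real.log (Real.exp 1 + ‖y‖ ^ 2) ^ (1 + η₀)) x :=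
    (Real.contDiffAt_rpow_const_of_ne
      (by have := one_le_log_s15 x; intro h; rw [h] at this; linarith)).comp x hlog
  exact hsq.mul hlogpow

lemma phi_contDiff15 (hη : 0 < η₀) : ContDiff ℝ (⊤ : ℕ∞) (fun y : E15 => barx15 η₀ y ^ a) := by
  rw [contDiff_iff_contDiffAt]
  intro x
  exact (Real.contDiffAt_rpow_const_of_ne (barx_pos15 hη.le x).ne').comp x
    (barx_contDiff15 hη).contDiffAt

/-- derivative of the 1d profile `r ↦ (√(e+r) · log(e+r)^(1+η₀))^a`. -/
lemma hasDerivAt_g15 (r : ℝ) (hr : 0 ≤ r) :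
    HasDerivAt (fun r : ℝ => (Real.sqrt (Real.exp 1 + r) * Real.log (Real.exp 1 + r) ^ (1 + η₀)) ^ a)
      (a * (Real.sqrt (Real.exp 1 + r) * Real.log (Real.exp 1 + r) ^ (1 + η₀)) ^ (a - 1) *
        (1 / (2 * Real.sqrt (Real.exp 1 + r)) * Real.log (Real.exp 1 + r) ^ (1 + η₀) +
         Real.sqrt (Real.exp 1 + r) *
           ((1 + η₀) * Real.log (Real.exp 1 + r) ^ η₀ * (Real.exp 1 + r)⁻¹))) r := by
  have hs : (0:ℝ) < Real.exp 1 + r := by positivity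
  have hlog1 : (1:ℝ) ≤ Real.log (Real.exp 1 + r) := by
    calc (1:ℝ) = Real.log (Real.exp 1) := (Real.log_exp 1).symm
      _ ≤ _ := Real.log_le_log (Real.exp_pos 1) (le_add_of_nonneg_right hr)
  have hbase : HasDerivAt (fun r : ℝ => Real.exp 1 + r) 1 r := (hasDerivAt_id r).const_add _
  have hsqrt : HasDerivAt (fun r : ℝ => Real.sqrt (Real.exp 1 + r))
      (1 / (2 * Real.sqrt (Real.exp 1 + r)) * 1) r :=
    (Real.hasDerivAt_sqrt hs.ne').comp r hbase
  have hlog : HasDerivAt (fun r : ℝ => Real.log (Real.exp 1 + r)) ((Real.exp 1 + r)⁻¹ * 1) r :=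
    (Real.hasDerivAt_log hs.ne').comp r hbase
  have hlogpow : HasDerivAt (fun r : ℝ => Real.log (Real.exp 1 + r) ^ (1 + η₀))
      ((1 + η₀) * Real.log (Real.exp 1 + r) ^ (1 + η₀ - 1) * ((Real.exp 1 + r)⁻¹ * 1)) r :=
    (Real.hasDerivAt_rpow_const (Or.inl (by linarith))).comp r hlog
  have hmul := hsqrt.mul hlogpow
  have hbx : (0:ℝ) < Real.sqrt (Real.exp 1 + r) * Real.log (Real.exp 1 + r) ^ (1 + η₀) := by
    have h1 : (0:ℝ) < Real.sqrt (Real.exp 1 + r) := Real.sqrt_pos.2 hs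
    have h2 : (0:ℝ) < Real.log (Real.exp 1 + r) ^ (1 + η₀) :=
      Real.rpow_pos_of_pos (by linarith) _
    positivity
  have hfinal := (Real.hasDerivAt_rpow_const (p := a) (Or.inl hbx.ne')).comp r hmul
  refine hfinal.congr_deriv ?_
  have h : 1 + η₀ - 1 = η₀ := by ring
  rw [h]
  ring

lemma phi_hasFDerivAt15 (hη : 0 < η₀) (x : E15) :
    HasFDerivAt (fun y : E15 => barx15 η₀ y ^ a)
      ((a * barx15 η₀ x ^ (a - 1) *
        (1 / (2 * Real.sqrt (Real.exp 1 + ‖x‖ ^ 2)) * Real.log (Real.exp 1 + ‖x‖ ^ 2) ^ (1 + η₀) +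
         Real.sqrt (Real.exp 1 + ‖x‖ ^ 2) *
           ((1 + η₀) * Real.log (Real.exp 1 + ‖x‖ ^ 2) ^ η₀ * (Real.exp 1 + ‖x‖ ^ 2)⁻¹))) •
        (2 • (innerSL ℝ x).comp (ContinuousLinearMap.id ℝ E15))) x := by
  have hn : HasFDerivAt (fun y : E15 => ‖y‖ ^ 2)
      (2 • (innerSL ℝ x).comp (ContinuousLinearMap.id ℝ E15)) x :=
    (hasFDerivAt_id x).norm_sq
  have hg := hasDerivAt_g15 (a := a) (η₀ := η₀) (‖x‖ ^ 2) (by positivity)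
  exact hg.comp_hasFDerivAt x hn

set_option synthInstance.maxHeartbeats 1000000 in
lemma phi_grad_bound15 (hη : 0 < η₀) (ha : 1 < a) (x : E15) :
    ‖fderiv ℝ (fun y : E15 => barx15 η₀ y ^ a) x‖ ≤
      a * (3 + 2 * η₀) * barx15 η₀ x ^ (a - 1) *
        Real.log (Real.exp 1 + ‖x‖ ^ 2) ^ (1 + η₀) := by
  rw [(phi_hasFDerivAt15 hη x).fderiv]
  set s := Real.exp 1 + ‖x‖ ^ 2 with hs_def
  have hs : (0:ℝ) < s := s_pos15 x
  set SS := Real.sqrt s with hSS_def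
  have hSS1 : (1:ℝ) ≤ SS := one_le_sqrt_s15 x
  have hSS : (0:ℝ) < SS := by linarith
  set L1 := Real.log s ^ (1 + η₀) with hL1_def
  set Lη := Real.log s ^ η₀ with hLη_def
  have hlog1 : (1:ℝ) ≤ Real.log s := one_le_log_s15 x
  have hL1pos : (0:ℝ) < L1 := Real.rpow_pos_of_pos (by linarith) _
  have hLη_le : Lη ≤ L1 := Real.rpow_le_rpow_of_exponent_le hlog1 (by linarith)
  have hLηpos : (0:ℝ) < Lη := Real.rpow_pos_of_pos (by linarith) _
  have hbx : (0:ℝ) < barx15 η₀ x := barx_pos15 hη.le x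
  have hbx1 : (0:ℝ) < barx15 η₀ x ^ (a - 1) := Real.rpow_pos_of_pos hbx _
  have hDn : ‖(2 • (innerSL ℝ x).comp (ContinuousLinearMap.id ℝ E15))‖ = 2 * ‖x‖ := by
    rw [ContinuousLinearMap.comp_id]
    have h2 : (2:ℕ) • (innerSL ℝ) x = (2:ℝ) • (innerSL ℝ) x := by
      rw [two_smul, two_smul]
    rw [h2, norm_smul (2:ℝ) ((innerSL ℝ) x)]
    simp [innerSL_apply_norm]
  rw [norm_smul, hDn, Real.norm_eq_abs]
  set P := 1 / (2 * SS) * L1 + SS * ((1 + η₀) * Lη * s⁻¹) with hP_def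
  have hPpos : (0:ℝ) < P := by
    have h1 : (0:ℝ) < 1 / (2 * SS) * L1 := by positivity
    have h2 : (0:ℝ) < SS * ((1 + η₀) * Lη * s⁻¹) := by positivity
    positivity
  have habs : |a * barx15 η₀ x ^ (a - 1) * P| = a * barx15 η₀ x ^ (a - 1) * P := by
    apply abs_of_pos; positivity
  rw [habs]
  have hxSS : ‖x‖ ≤ SS := by
    rw [hSS_def, hs_def]
    calc ‖x‖ = Real.sqrt (‖x‖ ^ 2) := by rw [Real.sqrt_sq (norm_nonneg x)]
      _ ≤ _ := Real.sqrt_le_sqrt (by nlinarith [Real.exp_pos 1])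
  have hSSsq : SS * SS = s := Real.mul_self_sqrt hs.le
  have key : P * (2 * SS) = L1 + 2 * (1 + η₀) * Lη := by
    have h1 : 1 / (2 * SS) * L1 * (2 * SS) = L1 := by field_simp
    have h2 : SS * ((1 + η₀) * Lη * s⁻¹) * (2 * SS) = 2 * (1 + η₀) * Lη := by
      have hinv : s⁻¹ * (SS * SS) = 1 := by rw [hSSsq]; exact inv_mul_cancel₀ hs.ne'
      linear_combination (2 * (1 + η₀) * Lη) * hinv
    calc P * (2 * SS) = 1 / (2 * SS) * L1 * (2 * SS) + SS * ((1 + η₀) * Lη * s⁻¹) * (2 * SS) := by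
          rw [hP_def]; ring
      _ = L1 + 2 * (1 + η₀) * Lη := by rw [h1, h2]
  calc a * barx15 η₀ x ^ (a - 1) * P * (2 * ‖x‖)
      ≤ a * barx15 η₀ x ^ (a - 1) * P * (2 * SS) := by
        apply mul_le_mul_of_nonneg_left (by linarith) (by positivity)
    _ = a * barx15 η₀ x ^ (a - 1) * (L1 + 2 * (1 + η₀) * Lη) := by
        rw [mul_assoc, key]
    _ ≤ a * barx15 η₀ x ^ (a - 1) * ((3 + 2 * η₀) * L1) := by
        apply mul_le_mul_of_nonneg_left _ (by positivity)
        nlinarith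
    _ = a * (3 + 2 * η₀) * barx15 η₀ x ^ (a - 1) * L1 := by ring

lemma log_weight_bound15 (ha : 1 < a) (hη : 0 < η₀) :
    ∃ C₂ > 0, ∀ x : E15,
      Real.log (Real.exp 1 + ‖x‖ ^ 2) ^ (1 + η₀) ≤ C₂ * barx15 η₀ x ^ (4 / (8 + a)) := by
  set ε : ℝ := 2 / ((8 + a) * (1 + η₀)) with hε_def
  have h8a : (0:ℝ) < 8 + a := by linarith
  have h1η : (0:ℝ) < 1 + η₀ := by linarith
  have hε : 0 < ε := by positivity
  refine ⟨(ε ^ (1 + η₀))⁻¹, by positivity, fun x => ?_⟩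
  set s : ℝ := Real.exp 1 + ‖x‖ ^ 2 with hs_def
  have hs : (0:ℝ) < s := s_pos15 x
  have hlog1 : (1:ℝ) ≤ Real.log s := one_le_log_s15 x
  have h1 : Real.log s ≤ s ^ ε / ε := Real.log_le_rpow_div hs.le hε
  have h2 : Real.log s ^ (1 + η₀) ≤ (s ^ ε / ε) ^ (1 + η₀) :=
    Real.rpow_le_rpow (by linarith) h1 h1η.le
  have h3 : (s ^ ε / ε) ^ (1 + η₀) = s ^ (ε * (1 + η₀)) / ε ^ (1 + η₀) := by
    rw [Real.div_rpow (Real.rpow_nonneg hs.le _) hε.le, ← Real.rpow_mul hs.le]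
  have hεη : ε * (1 + η₀) = 2 / (8 + a) := by
    rw [hε_def]; field_simp
  have h4 : Real.log s ^ (1 + η₀) ≤ (ε ^ (1 + η₀))⁻¹ * s ^ (2 / (8 + a)) := by
    rw [← hεη]
    calc Real.log s ^ (1 + η₀) ≤ s ^ (ε * (1 + η₀)) / ε ^ (1 + η₀) := by rw [← h3]; exact h2
      _ = (ε ^ (1 + η₀))⁻¹ * s ^ (ε * (1 + η₀)) := by ring
  refine h4.trans (mul_le_mul_of_nonneg_left ?_ (by positivity))
  have hsq : Real.sqrt s ≤ barx15 η₀ x := by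
    have hL : (1:ℝ) ≤ Real.log s ^ (1 + η₀) := Real.one_le_rpow hlog1 h1η.le
    calc Real.sqrt s = Real.sqrt s * 1 := (mul_one _).symm
      _ ≤ _ := by
          unfold s
          exact mul_le_mul_of_nonneg_left hL (Real.sqrt_nonneg _)
  calc s ^ (2 / (8 + a)) = (Real.sqrt s) ^ (4 / (8 + a)) := by
        rw [Real.sqrt_eq_rpow, ← Real.rpow_mul hs.le]
        congr 1
        field_simp
        ring
    _ ≤ barx15 η₀ x ^ (4 / (8 + a)) :=
        Real.rpow_le_rpow (Real.sqrt_nonneg _) hsq (by positivity)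

end Phi

/-! ### Integration by parts over the ball -/

/-- Core slice lemma: the integral over the ball of a partial derivative of a smooth
function vanishing on the boundary sphere is zero. -/
lemma core_pd_zero15 (R : ℝ) (hR : 0 < R) (f : E15 → ℝ) (hf : ContDiff ℝ (⊤ : ℕ∞) f)
    (h0 : ∀ x ∈ sphere (0 : E15) R, f x = 0) (i : Fin 2)
    (ℓ : ℝ × ℝ →L[ℝ] E15)
    (hemb : MeasurableEmbedding (⇑ℓ))
    (hmp : MeasurePreserving (⇑ℓ) volume volume)
    (hnorm : ∀ p : ℝ × ℝ, ‖ℓ p‖ ^ 2 = p.1 ^ 2 + p.2 ^ 2)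
    (hdir : ℓ (0, 1) = EuclideanSpace.single i 1) :
    ∫ x in ball (0 : E15) R, pd15 f i x = 0 := by
  have hfd : Differentiable ℝ f := hf.differentiable (by simp)
  have hG : Continuous (fun z : E15 => pd15 f i z) := by
    have h1 : Continuous (fderiv ℝ f) := hf.continuous_fderiv (by simp)
    exact h1.clm_apply continuous_const
  set g : ℝ × ℝ → ℝ := fun p => pd15 f i (ℓ p) with hg_def
  have hgc : Continuous g := hG.comp ℓ.continuous
  set disk : Set (ℝ × ℝ) := {p | p.1 ^ 2 + p.2 ^ 2 < R ^ 2} with hdisk_def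
  have hdisk_open : IsOpen disk :=
    isOpen_lt (by continuity) continuous_const
  have hdisk_meas : MeasurableSet disk := hdisk_open.measurableSet
  have hpre : (⇑ℓ) ⁻¹' (ball (0 : E15) R) = disk := by
    ext p
    simp only [Set.mem_preimage, mem_ball_zero_iff, hdisk_def, Set.mem_setOf_eq]
    constructor
    · intro h
      rw [← hnorm p]
      exact pow_lt_pow_left₀ h (norm_nonneg _) two_ne_zero
    · intro h
      exact lt_of_pow_lt_pow_left₀ 2 hR.le (by rw [hnorm p]; exact h)
  have step1 : ∫ x in ball (0 : E15) R, pd15 f i x = ∫ p in disk, g p := by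
    rw [← hpre]
    exact (hmp.setIntegral_preimage_emb hemb _ _).symm
  have hsub : disk ⊆ closedBall (0 : ℝ × ℝ) R := by
    intro p hp
    rw [hdisk_def, Set.mem_setOf_eq] at hp
    rw [mem_closedBall_zero_iff, Prod.norm_def]
    have h1 : |p.1| ≤ R := by
      rw [abs_le]; constructor <;> nlinarith [sq_nonneg p.1, sq_nonneg p.2]
    have h2 : |p.2| ≤ R := by
      rw [abs_le]; constructor <;> nlinarith [sq_nonneg p.1, sq_nonneg p.2]
    simp only [Real.norm_eq_abs]
    exact max_le h1 h2
  have hint : IntegrableOn g disk volume :=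
    ((hgc.continuousOn).integrableOn_compact (isCompact_closedBall _ _)).mono_set hsub
  have hind : Integrable (disk.indicator g) volume :=
    (integrable_indicator_iff hdisk_meas).2 hint
  have step2 : ∫ p in disk, g p = ∫ p, disk.indicator g p := (integral_indicator hdisk_meas).symm
  have hprod : (volume : Measure (ℝ × ℝ)) = (volume : Measure ℝ).prod volume :=
    MeasureTheory.Measure.volume_eq_prod ℝ ℝ
  have step3 : ∫ p, disk.indicator g p = ∫ x : ℝ, ∫ y : ℝ, disk.indicator g (x, y) := by
    rw [hprod] at hind ⊢
    exact integral_prod _ hind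
  have inner_zero : ∀ x : ℝ, (∫ y : ℝ, disk.indicator g (x, y)) = 0 := by
    intro x
    set c : ℝ := Real.sqrt (R ^ 2 - x ^ 2) with hc_def
    have hc0 : 0 ≤ c := Real.sqrt_nonneg _
    have hmemiff : ∀ y : ℝ, ((x, y) ∈ disk ↔ y ∈ Set.Ioo (-c) c) := by
      intro y
      have h1 : y ∈ Set.Ioo (-c) c ↔ |y| < c := by rw [Set.mem_Ioo, abs_lt]
      have h2 : |y| < c ↔ y ^ 2 < R ^ 2 - x ^ 2 := by
        rw [hc_def, Real.lt_sqrt (abs_nonneg y), sq_abs]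
      simp only [hdisk_def, Set.mem_setOf_eq]
      rw [h1, h2]
      constructor <;> intro h <;> linarith
    have hres : (fun y : ℝ => disk.indicator g (x, y))
        = (Set.Ioo (-c) c).indicator (fun y => g (x, y)) := by
      funext y
      by_cases h : (x, y) ∈ disk
      · rw [Set.indicator_of_mem h, Set.indicator_of_mem ((hmemiff y).1 h)]
      · rw [Set.indicator_of_notMem h,
          Set.indicator_of_notMem (fun hy => h ((hmemiff y).2 hy))]
    rw [hres, integral_indicator measurableSet_Ioo]
    have hle : -c ≤ c := by linarith
    rw [← integral_Ioc_eq_integral_Ioo, ← intervalIntegral.integral_of_le hle]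
    have hH : ∀ y : ℝ, HasDerivAt (fun y => f (ℓ (x, y))) (g (x, y)) y := by
      intro y
      have hline : (fun y : ℝ => ℓ (x, y))
          = fun y : ℝ => ℓ (x, 0) + y • EuclideanSpace.single i 1 := by
        funext y
        have hxy : ((x, y) : ℝ × ℝ) = (x, 0) + y • ((0 : ℝ), (1 : ℝ)) := by
          rw [Prod.smul_mk, Prod.mk_add_mk]
          simp
        rw [hxy, ℓ.map_add, ℓ.map_smul, hdir]
      have hld : HasDerivAt (fun y : ℝ => ℓ (x, y)) (EuclideanSpace.single i 1) y := by
        rw [hline]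
        simpa using ((hasDerivAt_id y).smul_const (EuclideanSpace.single i 1)).const_add (ℓ (x, 0))
      have hcomp := (hfd (ℓ (x, y))).hasFDerivAt.comp_hasDerivAt y hld
      exact hcomp
    have hii : IntervalIntegrable (fun y => g (x, y)) volume (-c) c :=
      (hgc.comp (Continuous.prodMk_right x)).intervalIntegrable _ _
    rw [intervalIntegral.integral_eq_sub_of_hasDerivAt (fun y _ => hH y) hii]
    rcases le_or_gt 0 (R ^ 2 - x ^ 2) with hd | hd
    · have hcsq : c ^ 2 = R ^ 2 - x ^ 2 := Real.sq_sqrt hd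
      have hsph : ∀ y : ℝ, x ^ 2 + y ^ 2 = R ^ 2 → f (ℓ (x, y)) = 0 := by
        intro y hy
        apply h0
        rw [mem_sphere_zero_iff_norm]
        have h3 : ‖ℓ (x, y)‖ ^ 2 = R ^ 2 := by rw [hnorm]; simpa using hy
        rw [← Real.sqrt_sq (norm_nonneg _), h3, Real.sqrt_sq hR.le]
      rw [hsph c (by linarith), hsph (-c) (by rw [neg_pow]; simp; linarith)]
      ring
    · have hc' : c = 0 := Real.sqrt_eq_zero'.2 (by linarith)
      rw [hc', neg_zero, sub_self]
  rw [step1, step2, step3]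
  simp only [inner_zero, integral_zero]

def Φ15 : E15 ≃ᵐ (ℝ × ℝ) :=
  (MeasurableEquiv.toLp 2 (Fin 2 → ℝ)).symm.trans MeasurableEquiv.finTwoArrow

lemma Φ15_mp : MeasurePreserving Φ15 volume volume :=
  (volume_preserving_finTwoArrow ℝ).comp (EuclideanSpace.volume_preserving_symm_measurableEquiv_toLp (Fin 2))

lemma Φ15_symm_apply (p : ℝ × ℝ) (j : Fin 2) : (Φ15.symm p : Fin 2 → ℝ) j = ![p.1, p.2] j := by
  fin_cases j <;>
  simp [Φ15, MeasurableEquiv.finTwoArrow, MeasurableEquiv.toLp,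
    MeasurableEquiv.trans, MeasurableEquiv.symm, MeasurableEquiv.piFinTwo,
    MeasurableEquiv.piCongrLeft, WithLp.equiv, piFinTwoEquiv]

def lmap15 (v w : E15) : ℝ × ℝ →L[ℝ] E15 :=
  (ContinuousLinearMap.fst ℝ ℝ ℝ).smulRight v + (ContinuousLinearMap.snd ℝ ℝ ℝ).smulRight w

lemma lmap15_apply (v w : E15) (p : ℝ × ℝ) (j : Fin 2) :
    (lmap15 v w p : Fin 2 → ℝ) j = p.1 * (v : Fin 2 → ℝ) j + p.2 * (w : Fin 2 → ℝ) j := by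
  simp [lmap15]

lemma e15_single_apply (i j : Fin 2) : (EuclideanSpace.single i (1:ℝ) : Fin 2 → ℝ) j
    = if j = i then 1 else 0 := EuclideanSpace.single_apply i 1 j

lemma lmap1_eq15 : ⇑(lmap15 (EuclideanSpace.single 0 1) (EuclideanSpace.single 1 1)) = ⇑Φ15.symm := by
  funext p
  refine PiLp.ext fun j => ?_
  show (lmap15 _ _ p : Fin 2 → ℝ) j = (Φ15.symm p : Fin 2 → ℝ) j
  rw [lmap15_apply, Φ15_symm_apply]
  fin_cases j <;> simp [e15_single_apply]

lemma lmap0_eq15 : ⇑(lmap15 (EuclideanSpace.single 1 1) (EuclideanSpace.single 0 1))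
    = ⇑Φ15.symm ∘ Prod.swap := by
  funext p
  refine PiLp.ext fun j => ?_
  show (lmap15 _ _ p : Fin 2 → ℝ) j = (Φ15.symm p.swap : Fin 2 → ℝ) j
  rw [lmap15_apply, Φ15_symm_apply]
  fin_cases j <;> simp [e15_single_apply, Prod.swap]

lemma norm_sq_coords15 (z : E15) : ‖z‖ ^ 2 = (z : Fin 2 → ℝ) 0 ^ 2 + (z : Fin 2 → ℝ) 1 ^ 2 := by
  rw [EuclideanSpace.norm_eq, Real.sq_sqrt (by positivity)]
  rw [Fin.sum_univ_two]
  simp [Real.norm_eq_abs, sq_abs]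

lemma swap_mp15 : MeasurePreserving (Prod.swap : ℝ × ℝ → ℝ × ℝ) volume volume := by
  rw [MeasureTheory.Measure.volume_eq_prod]
  exact MeasureTheory.Measure.measurePreserving_swap

lemma intBall_pd_zero15 (R : ℝ) (hR : 0 < R) (f : E15 → ℝ) (hf : ContDiff ℝ (⊤ : ℕ∞) f)
    (h0 : ∀ x ∈ sphere (0 : E15) R, f x = 0) (i : Fin 2) :
    ∫ x in ball (0 : E15) R, pd15 f i x = 0 := by
  fin_cases i
  · apply core_pd_zero15 R hR f hf h0 0
      (lmap15 (EuclideanSpace.single 1 1) (EuclideanSpace.single 0 1))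
    · rw [lmap0_eq15]
      exact Φ15.symm.measurableEmbedding.comp
        (MeasurableEquiv.prodComm (α := ℝ) (β := ℝ)).measurableEmbedding
    · rw [lmap0_eq15]
      exact (Φ15_mp.symm _).comp swap_mp15
    · intro p
      rw [norm_sq_coords15]
      have h1 := lmap15_apply (EuclideanSpace.single 1 1) (EuclideanSpace.single 0 1) p 0
      have h2 := lmap15_apply (EuclideanSpace.single 1 1) (EuclideanSpace.single 0 1) p 1
      rw [h1, h2]
      simp [e15_single_apply]
      ring
    · refine PiLp.ext fun j => ?_
      show (lmap15 _ _ _ : Fin 2 → ℝ) j = (EuclideanSpace.single (0:Fin 2) (1:ℝ) : Fin 2 → ℝ) j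
      rw [lmap15_apply]
      fin_cases j <;> simp [e15_single_apply]
  · apply core_pd_zero15 R hR f hf h0 1
      (lmap15 (EuclideanSpace.single 0 1) (EuclideanSpace.single 1 1))
    · rw [lmap1_eq15]
      exact Φ15.symm.measurableEmbedding
    · rw [lmap1_eq15]
      exact Φ15_mp.symm _
    · intro p
      rw [norm_sq_coords15]
      have h1 := lmap15_apply (EuclideanSpace.single 0 1) (EuclideanSpace.single 1 1) p 0
      have h2 := lmap15_apply (EuclideanSpace.single 0 1) (EuclideanSpace.single 1 1) p 1
      rw [h1, h2]
      simp [e15_single_apply]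
    · refine PiLp.ext fun j => ?_
      show (lmap15 _ _ _ : Fin 2 → ℝ) j = (EuclideanSpace.single (1:Fin 2) (1:ℝ) : Fin 2 → ℝ) j
      rw [lmap15_apply]
      fin_cases j <;> simp [e15_single_apply]

lemma intBall_div_zero15 (R : ℝ) (hR : 0 < R) (v : E15 → Fin 2 → ℝ)
    (hv : ∀ i, ContDiff ℝ (⊤ : ℕ∞) (fun x => v x i))
    (h0 : ∀ x ∈ sphere (0 : E15) R, ∀ i, v x i = 0) :
    ∫ x in ball (0 : E15) R, div15 v x = 0 := by
  have hInt : ∀ i : Fin 2, IntegrableOn (fun x => pd15 (fun y => v y i) i x)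
      (ball (0 : E15) R) volume := by
    intro i
    have hc : Continuous (fun x => pd15 (fun y => v y i) i x) :=
      ((hv i).continuous_fderiv (by simp)).clm_apply continuous_const
    exact (hc.continuousOn.integrableOn_compact (isCompact_closedBall _ _)).mono_set
      ball_subset_closedBall
  have h : ∫ x in ball (0 : E15) R, div15 v x
      = ∑ i : Fin 2, ∫ x in ball (0 : E15) R, pd15 (fun y => v y i) i x := by
    rw [← integral_finset_sum _ (fun i _ => hInt i)]
    rfl
  rw [h]
  refine Finset.sum_eq_zero fun i _ => ?_
  exact intBall_pd_zero15 R hR _ (hv i) (fun x hx => h0 x hx i) i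

/-! ### Differentiation under the integral -/

lemma finiteBall15 (R : ℝ) : IsFiniteMeasure (volume.restrict (ball (0 : E15) R)) := by
  constructor
  rw [Measure.restrict_apply_univ]
  exact measure_ball_lt_top

lemma rho_hasDerivAt15 (ρ : ℝ → E15 → ℝ) (hρ : ContDiff ℝ (⊤ : ℕ∞) (Function.uncurry ρ))
    (s : ℝ) (x : E15) :
    HasDerivAt (fun s' => ρ s' x) ((fderiv ℝ (Function.uncurry ρ) (s, x)) (1, 0)) s := by
  have h1 : HasFDerivAt (Function.uncurry ρ) (fderiv ℝ (Function.uncurry ρ) (s, x)) (s, x) :=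
    (hρ.differentiable (by simp) (s, x)).hasFDerivAt
  have h2 : HasDerivAt (fun s' : ℝ => ((s', x) : ℝ × E15)) ((1 : ℝ), (0 : E15)) s :=
    (hasDerivAt_id s).prodMk (hasDerivAt_const s x)
  exact h1.comp_hasDerivAt s h2

lemma hasDerivAt_mass15 (R : ℝ) (ρ : ℝ → E15 → ℝ)
    (hρ : ContDiff ℝ (⊤ : ℕ∞) (Function.uncurry ρ)) (φ : E15 → ℝ) (hφ : Continuous φ) (t : ℝ) :
    HasDerivAt (fun s => ∫ x in ball (0 : E15) R, ρ s x * φ x)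
      (∫ x in ball (0 : E15) R, (fderiv ℝ (Function.uncurry ρ) (t, x)) (1, 0) * φ x) t := by
  haveI := finiteBall15 R
  set μ := volume.restrict (ball (0 : E15) R) with hμ
  have hF'c : Continuous fun p : ℝ × E15 => (fderiv ℝ (Function.uncurry ρ) p) (1, 0) * φ p.2 :=
    ((hρ.continuous_fderiv (by simp)).clm_apply continuous_const).mul (hφ.comp continuous_snd)
  obtain ⟨M, hM⟩ := ((isCompact_Icc (a := t - 1) (b := t + 1)).prod
    (isCompact_closedBall (0 : E15) R)).exists_bound_of_continuousOn hF'c.continuousOn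
  have key := hasDerivAt_integral_of_dominated_loc_of_deriv_le (μ := μ) (x₀ := t)
    (F := fun s x => ρ s x * φ x)
    (F' := fun s x => (fderiv ℝ (Function.uncurry ρ) (s, x)) (1, 0) * φ x)
    (bound := fun _ => M) (s := ball t 1) (ball_mem_nhds t one_pos)
    (Filter.Eventually.of_forall fun s =>
      (((hρ.continuous.comp (Continuous.prodMk_right s)).mul hφ).aestronglyMeasurable))
    ?_ ?_ ?_ ?_ ?_
  · exact key.2
  · exact ((((hρ.continuous.comp (Continuous.prodMk_right t)).mul hφ).continuousOn).integrableOn_compact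
      (isCompact_closedBall _ _)).mono_set ball_subset_closedBall
  · exact (hF'c.comp (Continuous.prodMk_right t)).aestronglyMeasurable
  · refine (ae_restrict_iff' measurableSet_ball).2 (ae_of_all _ fun x hx s hs => ?_)
    apply hM (s, x)
    constructor
    · rw [mem_ball, Real.dist_eq, abs_lt] at hs
      exact Set.mem_Icc.2 ⟨by linarith [hs.1], by linarith [hs.2]⟩
    · exact ball_subset_closedBall hx
  · exact integrable_const M
  · exact ae_of_all _ fun x s _ => (rho_hasDerivAt15 ρ hρ s x).mul_const (φ x)

lemma e15_decomp (z : E15) :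
    ∑ i : Fin 2, (z : Fin 2 → ℝ) i • EuclideanSpace.single i (1:ℝ) = z := by
  have h : (∑ i : Fin 2, (z : Fin 2 → ℝ) i • EuclideanSpace.single i (1:ℝ))
      = (z : Fin 2 → ℝ) 0 • EuclideanSpace.single (0:Fin 2) (1:ℝ)
        + (z : Fin 2 → ℝ) 1 • EuclideanSpace.single (1:Fin 2) (1:ℝ) := Fin.sum_univ_two _
  rw [h]
  refine PiLp.ext fun j => ?_
  fin_cases j <;> simp [e15_single_apply]

/-- Differential inequality for the weighted mass `∫ ρ x̄^a` (proof of Lemma 3.5,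
step 2), via integration by parts and Hölder's inequality. -/
theorem stmt15 (a η₀ : ℝ) (ha : 1 < a) (hη : 0 < η₀) :
    ∃ C > 0, ∀ (R T : ℝ), 0 < R → 0 < T →
    ∀ (ρ : ℝ → E15 → ℝ) (u : ℝ → E15 → E15),
      ContDiff ℝ (⊤ : ℕ∞) (Function.uncurry ρ) →
      (∀ j : Fin 2, ContDiff ℝ (⊤ : ℕ∞) (fun p : ℝ × E15 => u p.1 p.2 j)) →
      (∀ t x, 0 ≤ ρ t x) →
      (∀ t ∈ Set.Ioo 0 T, ∀ x ∈ ball (0 : E15) R,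
        deriv (fun s => ρ s x) t + div15 (fun y i => ρ t y * u t y i) x = 0) →
      (∀ t ∈ Set.Icc 0 T, ∀ x ∈ sphere (0 : E15) R, u t x = 0) →
      ∀ t ∈ Set.Ioo 0 T, ∀ D : ℝ,
        HasDerivAt (fun s => ∫ x in ball (0 : E15) R, ρ s x * barx15 η₀ x ^ a) D t →
        D ≤ C * (∫ x in ball (0 : E15) R,
              ρ t x * ‖u t x‖ * barx15 η₀ x ^ (a - 1)
                * Real.log (Real.exp 1 + ‖x‖ ^ 2) ^ (1 + η₀))
        ∧ (∫ x in ball (0 : E15) R,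
              ρ t x * ‖u t x‖ * barx15 η₀ x ^ (a - 1)
                * Real.log (Real.exp 1 + ‖x‖ ^ 2) ^ (1 + η₀))
          ≤ C * (∫ x in ball (0 : E15) R,
                (ρ t x * barx15 η₀ x ^ (a - 1 + 8 / (8 + a)))
                  ^ ((8 + a) / (7 + a))) ^ ((7 + a) / (8 + a))
              * (∫ x in ball (0 : E15) R,
                  (‖u t x‖ * barx15 η₀ x ^ (-(4 / (8 + a))))
                    ^ (8 + a)) ^ (1 / (8 + a)) := by
  obtain ⟨C₂, hC₂pos, hC₂⟩ := log_weight_bound15 (a := a) (η₀ := η₀) ha hη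
  have ha0 : (0:ℝ) < a := by linarith
  set C₁ : ℝ := a * (3 + 2 * η₀) with hC₁_def
  have hC₁pos : 0 < C₁ := by positivity
  refine ⟨C₁ + C₂, by linarith, ?_⟩
  intro R T hR hT ρ u hρ hu hρ0 hpde hubc t ht D hD
  haveI := finiteBall15 R
  set φ : E15 → ℝ := fun x => barx15 η₀ x ^ a with hφ_def
  have hφ : ContDiff ℝ (⊤ : ℕ∞) φ := phi_contDiff15 hη
  have hρt : ContDiff ℝ (⊤ : ℕ∞) (fun y : E15 => ρ t y) := hρ.comp (contDiff_const.prodMk contDiff_id)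
  have hut : ∀ j, ContDiff ℝ (⊤ : ℕ∞) (fun y : E15 => u t y j) :=
    fun j => (hu j).comp (contDiff_const.prodMk contDiff_id)
  have hnu : Continuous (fun x : E15 => ‖u t x‖) := by
    have heq : (fun x : E15 => ‖u t x‖)
        = fun x : E15 => Real.sqrt (∑ j : Fin 2, ‖u t x j‖ ^ 2) := by
      funext x
      rw [EuclideanSpace.norm_eq]
    rw [heq]
    exact Real.continuous_sqrt.comp (continuous_finset_sum _ fun j _ =>
      (((hut j).continuous).norm).pow 2)
  have hballmeas : MeasurableSet (ball (0 : E15) R) := measurableSet_ball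
  -- basic positivity facts
  have hbx := fun x => barx_pos15 (η₀ := η₀) hη.le x
  have hlog0 : ∀ x : E15, (0:ℝ) ≤ Real.log (Real.exp 1 + ‖x‖ ^ 2) ^ (1 + η₀) :=
    fun x => Real.rpow_nonneg (by linarith [one_le_log_s15 x]) _
  -- continuity of integrands
  have hbarxc : Continuous (barx15 η₀) := (barx_contDiff15 hη).continuous
  have hrpowc : ∀ c : ℝ, Continuous (fun x : E15 => barx15 η₀ x ^ c) := by
    intro c
    exact hbarxc.rpow_const (fun x => Or.inl (hbx x).ne')
  have hlogc : Continuous (fun x : E15 => Real.log (Real.exp 1 + ‖x‖ ^ 2) ^ (1 + η₀)) := by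
    have h1 : Continuous (fun x : E15 => Real.exp 1 + ‖x‖ ^ 2) :=
      continuous_const.add ((continuous_norm).pow 2)
    have h2 : Continuous (fun x : E15 => Real.log (Real.exp 1 + ‖x‖ ^ 2)) := by
      refine h1.log ?_
      intro x; exact (s_pos15 x).ne'
    exact h2.rpow_const (fun x => Or.inl (by have := one_le_log_s15 x; intro h; rw [h] at this; linarith))
  have hI1c : Continuous (fun x : E15 => ρ t x * ‖u t x‖ * barx15 η₀ x ^ (a - 1)
      * Real.log (Real.exp 1 + ‖x‖ ^ 2) ^ (1 + η₀)) :=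
    ((((hρt.continuous).mul hnu).mul (hrpowc (a - 1))).mul hlogc)
  have hIOn : ∀ {h : E15 → ℝ}, Continuous h → IntegrableOn h (ball (0 : E15) R) volume :=
    fun {h} hc => (hc.continuousOn.integrableOn_compact (isCompact_closedBall _ _)).mono_set
      ball_subset_closedBall
  have hI1int : IntegrableOn (fun x : E15 => ρ t x * ‖u t x‖ * barx15 η₀ x ^ (a - 1)
      * Real.log (Real.exp 1 + ‖x‖ ^ 2) ^ (1 + η₀)) (ball (0 : E15) R) volume := hIOn hI1c
  have hI1nonneg : (0:ℝ) ≤ ∫ x in ball (0 : E15) R, ρ t x * ‖u t x‖ * barx15 η₀ x ^ (a - 1)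
      * Real.log (Real.exp 1 + ‖x‖ ^ 2) ^ (1 + η₀) := by
    refine setIntegral_nonneg hballmeas fun x _ => ?_
    have h1 : (0:ℝ) ≤ barx15 η₀ x ^ (a - 1) := (Real.rpow_pos_of_pos (hbx x) _).le
    exact mul_nonneg (mul_nonneg (mul_nonneg (hρ0 t x) (norm_nonneg _)) h1) (hlog0 x)
  -- derivative identification
  have hD' := hasDerivAt_mass15 R ρ hρ φ hφ.continuous t
  have hDeq : D = ∫ x in ball (0:E15) R,
      (fderiv ℝ (Function.uncurry ρ) (t, x)) (1, 0) * φ x := hD.unique hD'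
  -- pointwise rewriting of the integrand via PDE + product rule
  have hpdφc : ∀ i : Fin 2, Continuous (fun x : E15 => pd15 φ i x) := by
    intro i
    exact (hφ.continuous_fderiv (by simp)).clm_apply continuous_const
  have hw_smooth : ∀ j : Fin 2, ContDiff ℝ (⊤ : ℕ∞) (fun y : E15 => ρ t y * u t y j * φ y) :=
    fun j => (hρt.mul (hut j)).mul hφ
  have key1 : ∀ x ∈ ball (0 : E15) R,
      (fderiv ℝ (Function.uncurry ρ) (t, x)) (1, 0) * φ x
      = (∑ i : Fin 2, ρ t x * u t x i * pd15 φ i x)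
        - div15 (fun y i => ρ t y * u t y i * φ y) x := by
    intro x hx
    have h1 : (fderiv ℝ (Function.uncurry ρ) (t, x)) (1, 0) = deriv (fun s => ρ s x) t :=
      (rho_hasDerivAt15 ρ hρ t x).deriv.symm
    have h2 : deriv (fun s => ρ s x) t = - div15 (fun y i => ρ t y * u t y i) x := by
      have := hpde t ht x hx; linarith
    have h3 : ∀ i : Fin 2, pd15 (fun y => ρ t y * u t y i * φ y) i x
        = (ρ t x * u t x i) * pd15 φ i x + φ x * pd15 (fun y => ρ t y * u t y i) i x := by
      intro i
      unfold pd15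
      rw [fderiv_fun_mul (((hρt.mul (hut i)).differentiable (by simp)) x)
        ((hφ.differentiable (by simp)) x)]
      simp only [ContinuousLinearMap.add_apply, ContinuousLinearMap.coe_smul',
        Pi.smul_apply, smul_eq_mul]
    have h4 : div15 (fun y i => ρ t y * u t y i * φ y) x
        = (∑ i : Fin 2, ρ t x * u t x i * pd15 φ i x)
          + φ x * div15 (fun y i => ρ t y * u t y i) x := by
      simp only [div15]
      rw [Finset.mul_sum, ← Finset.sum_add_distrib]
      refine Finset.sum_congr rfl fun i _ => ?_
      rw [h3 i]
    rw [h1, h2, h4]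
    ring
  have hsumc : Continuous (fun x : E15 => ∑ i : Fin 2, ρ t x * u t x i * pd15 φ i x) := by
    refine continuous_finset_sum _ fun i _ => ?_
    exact ((hρt.continuous).mul ((hut i).continuous)).mul (hpdφc i)
  have hdivc : Continuous (fun x : E15 => div15 (fun y i => ρ t y * u t y i * φ y) x) := by
    refine continuous_finset_sum _ fun i _ => ?_
    exact ((hw_smooth i).continuous_fderiv (by simp)).clm_apply continuous_const
  have hDeq2 : D = ∫ x in ball (0:E15) R,
      ((∑ i : Fin 2, ρ t x * u t x i * pd15 φ i x)
        - div15 (fun y i => ρ t y * u t y i * φ y) x) := by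
    rw [hDeq]
    exact setIntegral_congr_fun hballmeas key1
  have hdivzero : ∫ x in ball (0:E15) R, div15 (fun y i => ρ t y * u t y i * φ y) x = 0 := by
    refine intBall_div_zero15 R hR _ hw_smooth fun x hx i => ?_
    have hu0 : u t x = 0 := hubc t ⟨ht.1.le, ht.2.le⟩ x hx
    have : (u t x : Fin 2 → ℝ) i = 0 := by rw [hu0]; rfl
    rw [this]
    ring
  have hDeq3 : D = ∫ x in ball (0:E15) R, ∑ i : Fin 2, ρ t x * u t x i * pd15 φ i x := by
    rw [hDeq2, integral_sub (hIOn hsumc) (hIOn hdivc), hdivzero, sub_zero]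
  -- pointwise bound on the divergence-weighted integrand
  have hpt1 : ∀ x : E15, (∑ i : Fin 2, ρ t x * u t x i * pd15 φ i x)
      ≤ C₁ * (ρ t x * ‖u t x‖ * barx15 η₀ x ^ (a - 1)
        * Real.log (Real.exp 1 + ‖x‖ ^ 2) ^ (1 + η₀)) := by
    intro x
    have hsum : ∑ i : Fin 2, (u t x : Fin 2 → ℝ) i * pd15 φ i x
        = fderiv ℝ φ x (u t x) := by
      conv_rhs => rw [← e15_decomp (u t x)]
      rw [map_sum]
      refine Finset.sum_congr rfl fun i _ => ?_
      rw [_root_.map_smul, smul_eq_mul]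
      rfl
    have hstep : ∑ i : Fin 2, ρ t x * u t x i * pd15 φ i x
        = ρ t x * fderiv ℝ φ x (u t x) := by
      rw [← hsum, Finset.mul_sum]
      refine Finset.sum_congr rfl fun i _ => ?_
      ring
    rw [hstep]
    have hb1 : fderiv ℝ φ x (u t x) ≤ ‖fderiv ℝ φ x‖ * ‖u t x‖ := by
      refine (le_abs_self _).trans ?_
      rw [← Real.norm_eq_abs]
      exact (fderiv ℝ φ x).le_opNorm (u t x)
    have hb2 : ‖fderiv ℝ φ x‖ ≤ C₁ * barx15 η₀ x ^ (a - 1)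
        * Real.log (Real.exp 1 + ‖x‖ ^ 2) ^ (1 + η₀) := by
      rw [hφ_def, hC₁_def]
      exact phi_grad_bound15 hη ha x
    calc ρ t x * fderiv ℝ φ x (u t x)
        ≤ ρ t x * (‖fderiv ℝ φ x‖ * ‖u t x‖) :=
          mul_le_mul_of_nonneg_left hb1 (hρ0 t x)
      _ ≤ ρ t x * ((C₁ * barx15 η₀ x ^ (a - 1)
            * Real.log (Real.exp 1 + ‖x‖ ^ 2) ^ (1 + η₀)) * ‖u t x‖) :=
          mul_le_mul_of_nonneg_left
            (mul_le_mul_of_nonneg_right hb2 (norm_nonneg _)) (hρ0 t x)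
      _ = C₁ * (ρ t x * ‖u t x‖ * barx15 η₀ x ^ (a - 1)
            * Real.log (Real.exp 1 + ‖x‖ ^ 2) ^ (1 + η₀)) := by ring
  have hD_le : D ≤ C₁ * ∫ x in ball (0 : E15) R, ρ t x * ‖u t x‖ * barx15 η₀ x ^ (a - 1)
      * Real.log (Real.exp 1 + ‖x‖ ^ 2) ^ (1 + η₀) := by
    rw [hDeq3, ← MeasureTheory.integral_const_mul]
    exact setIntegral_mono_on (hIOn hsumc) ((hIOn hI1c).const_mul C₁) hballmeas
      (fun x _ => hpt1 x)
  constructor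
  · refine hD_le.trans ?_
    exact mul_le_mul_of_nonneg_right (by linarith) hI1nonneg
  -- Hölder part
  · set f : E15 → ℝ := fun x => ρ t x * barx15 η₀ x ^ (a - 1 + 8 / (8 + a)) with hf_def
    set g : E15 → ℝ := fun x => ‖u t x‖ * barx15 η₀ x ^ (-(4 / (8 + a))) with hg_def
    have hfc : Continuous f := (hρt.continuous).mul (hrpowc _)
    have hgc : Continuous g := hnu.mul (hrpowc _)
    have hf0 : ∀ x, 0 ≤ f x := fun x =>
      mul_nonneg (hρ0 t x) (Real.rpow_nonneg (hbx x).le _)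
    have hg0 : ∀ x, 0 ≤ g x := fun x =>
      mul_nonneg (norm_nonneg _) (Real.rpow_nonneg (hbx x).le _)
    have h8a : (0:ℝ) < 8 + a := by linarith
    have h7a : (0:ℝ) < 7 + a := by linarith
    have hpq : ((8 + a) / (7 + a)).HolderConjugate (8 + a) := by
      rw [Real.holderConjugate_iff]
      constructor
      · rw [lt_div_iff₀ h7a]; linarith
      · rw [inv_div]
        field_simp
        ring
    set μ := volume.restrict (ball (0 : E15) R) with hμ_def
    have hmemf : MemLp f (ENNReal.ofReal ((8 + a) / (7 + a))) μ := by
      obtain ⟨Mf, hMf⟩ := (isCompact_closedBall (0 : E15) R).exists_bound_of_continuousOn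
        hfc.continuousOn
      exact MemLp.of_bound hfc.aestronglyMeasurable Mf
        ((ae_restrict_iff' hballmeas).2 (ae_of_all _ fun x hx =>
          hMf x (ball_subset_closedBall hx)))
    have hmemg : MemLp g (ENNReal.ofReal (8 + a)) μ := by
      obtain ⟨Mg, hMg⟩ := (isCompact_closedBall (0 : E15) R).exists_bound_of_continuousOn
        hgc.continuousOn
      exact MemLp.of_bound hgc.aestronglyMeasurable Mg
        ((ae_restrict_iff' hballmeas).2 (ae_of_all _ fun x hx =>
          hMg x (ball_subset_closedBall hx)))
    have holder := integral_mul_le_Lp_mul_Lq_of_nonneg hpq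
      (ae_of_all _ hf0) (ae_of_all _ hg0) hmemf hmemg
    -- pointwise comparison
    have hpt2 : ∀ x : E15, ρ t x * ‖u t x‖ * barx15 η₀ x ^ (a - 1)
        * Real.log (Real.exp 1 + ‖x‖ ^ 2) ^ (1 + η₀) ≤ C₂ * (f x * g x) := by
      intro x
      have hbxx := hbx x
      have h1 : barx15 η₀ x ^ (a - 1 + 8 / (8 + a)) * barx15 η₀ x ^ (-(4 / (8 + a)))
          = barx15 η₀ x ^ (a - 1) * barx15 η₀ x ^ (4 / (8 + a)) := by
        rw [← Real.rpow_add hbxx, ← Real.rpow_add hbxx]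
        congr 1
        ring
      have h2 : f x * g x = (ρ t x * ‖u t x‖ * barx15 η₀ x ^ (a - 1))
          * barx15 η₀ x ^ (4 / (8 + a)) := by
        rw [hf_def, hg_def]
        calc ρ t x * barx15 η₀ x ^ (a - 1 + 8 / (8 + a))
              * (‖u t x‖ * barx15 η₀ x ^ (-(4 / (8 + a))))
            = ρ t x * ‖u t x‖ * (barx15 η₀ x ^ (a - 1 + 8 / (8 + a))
              * barx15 η₀ x ^ (-(4 / (8 + a)))) := by ring
          _ = _ := by rw [h1]; ring
      rw [h2]
      have h3 : (0:ℝ) ≤ ρ t x * ‖u t x‖ * barx15 η₀ x ^ (a - 1) :=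
        mul_nonneg (mul_nonneg (hρ0 t x) (norm_nonneg _)) (Real.rpow_nonneg hbxx.le _)
      calc ρ t x * ‖u t x‖ * barx15 η₀ x ^ (a - 1)
            * Real.log (Real.exp 1 + ‖x‖ ^ 2) ^ (1 + η₀)
          ≤ ρ t x * ‖u t x‖ * barx15 η₀ x ^ (a - 1)
            * (C₂ * barx15 η₀ x ^ (4 / (8 + a))) :=
            mul_le_mul_of_nonneg_left (hC₂ x) h3
        _ = C₂ * (ρ t x * ‖u t x‖ * barx15 η₀ x ^ (a - 1)
            * barx15 η₀ x ^ (4 / (8 + a))) := by ring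
        _ = C₂ * ((ρ t x * ‖u t x‖ * barx15 η₀ x ^ (a - 1))
            * barx15 η₀ x ^ (4 / (8 + a))) := by ring
    have hstep1 : (∫ x in ball (0 : E15) R, ρ t x * ‖u t x‖ * barx15 η₀ x ^ (a - 1)
        * Real.log (Real.exp 1 + ‖x‖ ^ 2) ^ (1 + η₀))
        ≤ C₂ * ∫ x in ball (0 : E15) R, f x * g x := by
      rw [← MeasureTheory.integral_const_mul]
      exact setIntegral_mono_on hI1int (((hIOn (hfc.mul hgc))).const_mul C₂) hballmeas
        (fun x _ => hpt2 x)
    have hABnn : (0:ℝ) ≤ (∫ x in ball (0 : E15) R, f x ^ ((8 + a) / (7 + a)))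
        ^ ((7 + a) / (8 + a)) * (∫ x in ball (0 : E15) R, g x ^ (8 + a)) ^ (1 / (8 + a)) := by
      have hA : (0:ℝ) ≤ ∫ x in ball (0 : E15) R, f x ^ ((8 + a) / (7 + a)) :=
        setIntegral_nonneg hballmeas fun x _ => Real.rpow_nonneg (hf0 x) _
      have hB : (0:ℝ) ≤ ∫ x in ball (0 : E15) R, g x ^ (8 + a) :=
        setIntegral_nonneg hballmeas fun x _ => Real.rpow_nonneg (hg0 x) _
      exact mul_nonneg (Real.rpow_nonneg hA _) (Real.rpow_nonneg hB _)
    have hexp : (1:ℝ) / ((8 + a) / (7 + a)) = (7 + a) / (8 + a) := one_div_div _ _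
    have hstep2 : (∫ x in ball (0 : E15) R, f x * g x)
        ≤ (∫ x in ball (0 : E15) R, f x ^ ((8 + a) / (7 + a))) ^ ((7 + a) / (8 + a))
          * (∫ x in ball (0 : E15) R, g x ^ (8 + a)) ^ (1 / (8 + a)) := by
      rw [← hexp]
      exact holder
    calc (∫ x in ball (0 : E15) R, ρ t x * ‖u t x‖ * barx15 η₀ x ^ (a - 1)
          * Real.log (Real.exp 1 + ‖x‖ ^ 2) ^ (1 + η₀))
        ≤ C₂ * ∫ x in ball (0 : E15) R, f x * g x := hstep1
      _ ≤ C₂ * ((∫ x in ball (0 : E15) R, f x ^ ((8 + a) / (7 + a))) ^ ((7 + a) / (8 + a))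
          * (∫ x in ball (0 : E15) R, g x ^ (8 + a)) ^ (1 / (8 + a))) :=
          mul_le_mul_of_nonneg_left hstep2 hC₂pos.le
      _ ≤ (C₁ + C₂) * ((∫ x in ball (0 : E15) R, f x ^ ((8 + a) / (7 + a)))
            ^ ((7 + a) / (8 + a))
          * (∫ x in ball (0 : E15) R, g x ^ (8 + a)) ^ (1 / (8 + a))) :=
          mul_le_mul_of_nonneg_right (by linarith) hABnn
      _ = (C₁ + C₂) * (∫ x in ball (0 : E15) R, f x ^ ((8 + a) / (7 + a)))
            ^ ((7 + a) / (8 + a))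
          * (∫ x in ball (0 : E15) R, g x ^ (8 + a)) ^ (1 / (8 + a)) := by ring

end
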